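/- arXiv:1510.01952 — 3 statements merged into one kernel-verified Lean document; each statement's English description precedes it below -/
import Mathlib

section
/- Let c_n denote the number of UUD-equivalence classes of ballot paths of length n. Then c₀ = 1, c₁ = 1, c₂ = 1, and c_{n+3} = c_{n+2} + c_n for every n ≥ 0. -/
/-- A path is a list of steps: `true` is an up-step U, `false` is a down-step D. -/
abbrev Step := Bool

/-- The height of the `j`-th lattice point of the path `p`. -/
def pathHeight (p : List Bool) (j : ℕ) : ℤ :=
  ((p.take j).count true : ℤ) - ((p.take j).count false : ℤ)

/-- A ballot path: every prefix has at least as many U's as D's. -/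
def IsBallot (p : List Bool) : Prop :=
  ∀ k : ℕ, (p.take k).count false ≤ (p.take k).count true

/-- A Dyck path: a ballot path with equally many U's and D's. -/
def IsDyck (p : List Bool) : Prop :=
  IsBallot p ∧ p.count true = p.count false

/-- The string `τ` occurs at (0-indexed) position `i` of the path `p`. -/
def OccursAt (τ p : List Bool) (i : ℕ) : Prop :=
  (p.drop i).take τ.length = τ

/-- Two paths are `τ`-equivalent: same length and occurrences of `τ` at the same positions. -/
def PathEquiv (τ p q : List Bool) : Prop :=
  p.length = q.length ∧ ∀ i : ℕ, OccursAt τ p i ↔ OccursAt τ q i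

/-- The setoid of `τ`-equivalence on ballot paths of length `n`. -/
def ballotSetoid (τ : List Bool) (n : ℕ) :
    Setoid {p : List Bool // IsBallot p ∧ p.length = n} where
  r p q := PathEquiv τ p.1 q.1
  iseqv := ⟨fun _ => ⟨rfl, fun _ => Iff.rfl⟩,
            fun h => ⟨h.1.symm, fun i => (h.2 i).symm⟩,
            fun h1 h2 => ⟨h1.1.trans h2.1, fun i => (h1.2 i).trans (h2.2 i)⟩⟩

/-- The number of `τ`-equivalence classes of ballot paths of length `n`. -/
noncomputable def numBallotClasses (τ : List Bool) (n : ℕ) : ℕ :=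
  Nat.card (Quotient (ballotSetoid τ n))

/-- The setoid of `τ`-equivalence on Dyck paths of semilength `n`. -/
def dyckSetoid (τ : List Bool) (n : ℕ) :
    Setoid {p : List Bool // IsDyck p ∧ p.length = 2 * n} where
  r p q := PathEquiv τ p.1 q.1
  iseqv := ⟨fun _ => ⟨rfl, fun _ => Iff.rfl⟩,
            fun h => ⟨h.1.symm, fun i => (h.2 i).symm⟩,
            fun h1 h2 => ⟨h1.1.trans h2.1, fun i => (h1.2 i).trans (h2.2 i)⟩⟩

/-- The number of `τ`-equivalence classes of Dyck paths of semilength `n`. -/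
noncomputable def numDyckClasses (τ : List Bool) (n : ℕ) : ℕ :=
  Nat.card (Quotient (dyckSetoid τ n))

/-! UUD has no proper border, so two of its occurrences in a path are at least three steps
apart: the occurrence set of a path of length `n` is a packing of disjoint windows `[i, i + 3)`
into `[0, n)`. Conversely a packing `A` is the occurrence set of the path with a D exactly at the
positions `i + 2`, `i ∈ A`; there every D follows a U, so the path is ballot. Classes of ballot
paths thus correspond to packings, i.e. to tilings of a strip of length `n` by monominoes and
trominoes, and splitting on whether the last window is used gives `c (n + 3) = c (n + 2) + c n`.
-/

open Finset

local notation "UUD" => [true, true, false]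

def occurrenceSet (τ p : List Bool) : Set ℕ := {i | OccursAt τ p i}

theorem ballotSetoid_eq_ker (τ : List Bool) (n : ℕ) :
    ballotSetoid τ n = Setoid.ker fun p => occurrenceSet τ p.1 := by
  ext p q
  change PathEquiv τ p.1 q.1 ↔ occurrenceSet τ p.1 = occurrenceSet τ q.1
  simp [PathEquiv, p.2.2, q.2.2, Set.ext_iff, occurrenceSet]

theorem numBallotClasses_eq_card_range (τ : List Bool) (n : ℕ) :
    numBallotClasses τ n = Nat.card (Set.range
      fun p : {p : List Bool // IsBallot p ∧ p.length = n} => occurrenceSet τ p.1) := by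
  rw [numBallotClasses, ballotSetoid_eq_ker]
  exact Nat.card_congr (Setoid.quotientKerEquivRange _)

def packings (k n : ℕ) : Finset (Finset ℕ) :=
  (range (n + 1)).powerset.filter fun A =>
    (∀ i ∈ A, i + k ≤ n) ∧ ∀ i ∈ A, ∀ j ∈ A, i < j → i + k ≤ j

theorem mem_packings {k n : ℕ} {A : Finset ℕ} :
    A ∈ packings k n ↔ (∀ i ∈ A, i + k ≤ n) ∧ ∀ i ∈ A, ∀ j ∈ A, i < j → i + k ≤ j := by
  simp only [packings, mem_filter, mem_powerset, and_iff_right_iff_imp]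
  exact fun h i hi => mem_range.2 (by have := h.1 i hi; omega)

theorem filter_not_mem_packings (k n : ℕ) :
    (packings (k + 1) (n + k + 1)).filter (n ∉ ·) = packings (k + 1) (n + k) := by
  ext A
  simp only [mem_filter, mem_packings]
  constructor
  · rintro ⟨⟨hle, hsep⟩, hn⟩
    refine ⟨fun i hi => ?_, hsep⟩
    have := hle i hi
    have : i ≠ n := by rintro rfl; exact hn hi
    omega
  · rintro ⟨hle, hsep⟩
    exact ⟨⟨fun i hi => by have := hle i hi; omega, hsep⟩, fun hn => by have := hle n hn; omega⟩

theorem card_filter_mem_packings (k n : ℕ) :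
    ((packings (k + 1) (n + k + 1)).filter (n ∈ ·)).card = (packings (k + 1) n).card := by
  refine card_nbij' (·.erase n) (insert n) ?_ ?_ ?_ ?_
  · intro A hA
    simp only [mem_coe, mem_filter, mem_packings] at hA ⊢
    obtain ⟨⟨hle, hsep⟩, hn⟩ := hA
    refine ⟨fun i hi => ?_, fun i hi j hj => hsep i (mem_of_mem_erase hi) j (mem_of_mem_erase hj)⟩
    obtain ⟨hin, hi⟩ := mem_erase.1 hi
    have := hle i hi
    have := hsep i hi n hn (by omega)
    omega
  · intro A hA
    simp only [mem_coe, mem_filter, mem_packings] at hA ⊢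
    obtain ⟨hle, hsep⟩ := hA
    refine ⟨⟨?_, ?_⟩, mem_insert_self n A⟩
    · intro i hi
      obtain rfl | hi := mem_insert.1 hi
      · omega
      · have := hle i hi; omega
    · intro i hi j hj hij
      rw [mem_insert] at hi hj
      rcases hi with rfl | hi <;> rcases hj with rfl | hj
      · omega
      · have := hle j hj; omega
      · have := hle i hi; omega
      · exact hsep i hi j hj hij
  · intro A hA
    exact insert_erase (mem_filter.1 hA).2
  · intro A hA
    exact erase_insert fun hn => by have := (mem_packings.1 hA).1 n hn; omega

theorem card_packings_succ_add (k n : ℕ) :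
    (packings (k + 1) (n + k + 1)).card =
      (packings (k + 1) (n + k)).card + (packings (k + 1) n).card := by
  rw [← filter_not_mem_packings k n, ← card_filter_mem_packings k n]
  exact (card_filter_add_card_filter_not _).symm.trans (Nat.add_comm _ _)

theorem occursAt_uud_iff (p : List Bool) (i : ℕ) :
    OccursAt UUD p i ↔ p[i]? = some true ∧ p[i + 1]? = some true ∧ p[i + 2]? = some false := by
  have hdrop (j : ℕ) : p[i + j]? = (p.drop i)[j]? := (List.getElem?_drop ..).symm
  rw [OccursAt, hdrop 1, hdrop 2, show p[i]? = (p.drop i)[0]? by simp]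
  rcases p.drop i with _ | ⟨a, _ | ⟨b, _ | ⟨c, t⟩⟩⟩ <;> simp

theorem add_three_le_length_of_occursAt_uud {p : List Bool} {i : ℕ} (h : OccursAt UUD p i) :
    i + 3 ≤ p.length := by
  obtain ⟨hlt, -⟩ := List.getElem?_eq_some_iff.1 ((occursAt_uud_iff p i).1 h).2.2
  omega

theorem add_three_le_of_occursAt_uud {p : List Bool} {i j : ℕ} (hi : OccursAt UUD p i)
    (hj : OccursAt UUD p j) (hij : i < j) : i + 3 ≤ j := by
  rw [occursAt_uud_iff] at hi hj
  by_contra! hji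
  obtain rfl | rfl : j = i + 1 ∨ j = i + 2 := by omega
  · simp [hi.2.2] at hj
  · simp [hi.2.2] at hj

theorem exists_packing_eq_occurrenceSet_uud (p : List Bool) :
    ∃ A ∈ packings 3 p.length, (A : Set ℕ) = occurrenceSet UUD p := by
  classical
  refine ⟨(range p.length).filter (OccursAt UUD p), mem_packings.2 ⟨?_, ?_⟩, ?_⟩
  · intro i hi
    exact add_three_le_length_of_occursAt_uud (mem_filter.1 hi).2
  · intro i hi j hj
    exact add_three_le_of_occursAt_uud (mem_filter.1 hi).2 (mem_filter.1 hj).2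
  · ext i
    simp only [coe_filter, mem_range, occurrenceSet, Set.mem_ofPred_eq, and_iff_right_iff_imp]
    intro h
    have := add_three_le_length_of_occursAt_uud h
    omega

theorem isBallot_map_range {f : ℕ → Bool} (h0 : f 0 = true)
    (hf : ∀ j, f (j + 1) = false → f j = true) (n : ℕ) : IsBallot ((List.range n).map f) := by
  -- One U is held in reserve for the D at position `m`, if there is one.
  have key (m : ℕ) : ((List.range m).map f).count false + (if f m then 0 else 1) ≤
      ((List.range m).map f).count true := by
    induction m with
    | zero => simp [h0]
    | succ m ih =>
      have := hf m
      rw [List.range_succ, List.map_append, List.count_append, List.count_append]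
      cases hm : f m <;> cases hm' : f (m + 1) <;> simp [hm, hm'] at this ih ⊢ <;> omega
  intro k
  rw [← List.map_take, List.take_range]
  exact le_of_add_le_left (key _)

def windowPath (n : ℕ) (A : Finset ℕ) : List Bool :=
  (List.range n).map fun k => decide (∀ i ∈ A, i + 2 ≠ k)

section WindowPath

variable {n : ℕ} {A : Finset ℕ}

theorem getElem?_windowPath {k : ℕ} (hk : k < n) :
    (windowPath n A)[k]? = some (decide (∀ i ∈ A, i + 2 ≠ k)) := by
  simp [windowPath, hk]

theorem isBallot_windowPath (hA : ∀ i ∈ A, ∀ j ∈ A, i < j → i + 2 ≤ j) :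
    IsBallot (windowPath n A) := by
  refine isBallot_map_range (by simp) (fun j hj => ?_) n
  simp only [decide_eq_false_iff_not, decide_eq_true_eq, not_forall, not_not] at hj ⊢
  obtain ⟨i, hi, hij⟩ := hj
  intro i' hi' hi'j
  have := hA i' hi' i hi (by omega)
  omega

theorem occurrenceSet_windowPath (hA : A ∈ packings 3 n) :
    occurrenceSet UUD (windowPath n A) = A := by
  obtain ⟨hle, hsep⟩ := mem_packings.1 hA
  ext i
  simp only [occurrenceSet, Set.mem_ofPred_eq, mem_coe, occursAt_uud_iff]
  constructor
  · rintro ⟨-, -, h⟩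
    have hlt : i + 2 < n := by
      simpa [windowPath] using (List.getElem?_eq_some_iff.1 h).1
    simp only [getElem?_windowPath hlt, Option.some.injEq, decide_eq_false_iff_not, not_forall,
      not_not] at h
    obtain ⟨j, hj, hji⟩ := h
    rwa [show i = j by omega]
  · intro hi
    have := hle i hi
    have hfree (k : ℕ) (hk : k < 2) : ∀ j ∈ A, j + 2 ≠ i + k := fun j hj hji =>
      by have := hsep j hj i hi (by omega); omega
    refine ⟨?_, ?_, ?_⟩ <;> rw [getElem?_windowPath (by omega)]
    · simpa using hfree 0 (by omega)
    · simpa using hfree 1 (by omega)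
    · simpa using hi

end WindowPath

theorem range_occurrenceSet_uud (n : ℕ) :
    Set.range (fun p : {p : List Bool // IsBallot p ∧ p.length = n} => occurrenceSet UUD p.1) =
      (↑) '' (packings 3 n : Set (Finset ℕ)) := by
  ext S
  constructor
  · rintro ⟨⟨p, -, rfl⟩, rfl⟩
    exact exists_packing_eq_occurrenceSet_uud p
  · rintro ⟨A, hA, rfl⟩
    have hsep := (mem_packings.1 hA).2
    exact ⟨⟨windowPath n A, isBallot_windowPath fun i hi j hj hij => by
      have := hsep i hi j hj hij; omega, by simp [windowPath]⟩, occurrenceSet_windowPath hA⟩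

theorem numBallotClasses_uud (n : ℕ) : numBallotClasses UUD n = (packings 3 n).card := by
  rw [numBallotClasses_eq_card_range, range_occurrenceSet_uud,
    Nat.card_image_of_injective coe_injective, Nat.card_coe_set_eq, Set.ncard_coe_finset]

/-- the numbers of UUD-equivalence classes of ballot paths satisfy
`c₀ = c₁ = c₂ = 1` and `c_{n+3} = c_{n+2} + c_n`. -/
theorem uud_classes_recurrence :
    numBallotClasses [true, true, false] 0 = 1 ∧
    numBallotClasses [true, true, false] 1 = 1 ∧
    numBallotClasses [true, true, false] 2 = 1 ∧
    ∀ n : ℕ, numBallotClasses [true, true, false] (n + 3) =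
      numBallotClasses [true, true, false] (n + 2) +
        numBallotClasses [true, true, false] n := by
  simp only [numBallotClasses_uud]
  exact ⟨by decide, by decide, by decide, card_packings_succ_add 2⟩
end

section
/- For every integer n ≥ 1, the number of UDU-equivalence classes of ballot paths of length n equals f_n, the n-th Fibonacci number. -/
/-!
`τ`-equivalence is the kernel of the map sending a path to the indicator list of the positions
where `τ` occurs, so the classes of ballot paths of length `n` are counted by the image of that
map. For `τ = UDU` and `n = m + 2` the indicator vanishes at the last two positions and has no two
adjacent `true`s, as UDU cannot overlap itself at shift one. Conversely every such word `l` of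
length `m` is realized by the path `U (not l) U`, which is ballot because its down-steps are
isolated. Binary words of length `m` without two adjacent `true`s are counted by `f (m + 2)`.
-/

instance instDecidableOccursAt (τ p : List Bool) (i : ℕ) : Decidable (OccursAt τ p i) :=
  inferInstanceAs (Decidable (_ = _))

def occurrences (τ p : List Bool) : List Bool :=
  (List.range p.length).map fun i => decide (OccursAt τ p i)

section Occurrences

variable (τ : List Bool)

@[simp] lemma occurrences_nil : occurrences τ [] = [] := rfl

@[simp] lemma occursAt_cons_succ (a : Bool) (p : List Bool) (i : ℕ) :
    OccursAt τ (a :: p) (i + 1) ↔ OccursAt τ p i := Iff.rfl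

@[simp] lemma occurrences_cons (a : Bool) (p : List Bool) :
    occurrences τ (a :: p) = decide (OccursAt τ (a :: p) 0) :: occurrences τ p := by
  simp [occurrences, List.range_succ_eq_map]

lemma occurrences_drop (p : List Bool) (k : ℕ) :
    occurrences τ (p.drop k) = (occurrences τ p).drop k := by
  induction p generalizing k with
  | nil => simp
  | cons a p ih => cases k <;> simp [ih]

lemma occursAt_iff_of_length_le {p : List Bool} {i : ℕ} (h : p.length ≤ i) :
    OccursAt τ p i ↔ τ = [] := by
  simp [OccursAt, List.drop_eq_nil_of_le h, eq_comm]

lemma pathEquiv_iff_occurrences_eq (p q : List Bool) :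
    PathEquiv τ p q ↔ occurrences τ p = occurrences τ q := by
  constructor
  · rintro ⟨hlen, hocc⟩
    refine List.ext_getElem (by simp [occurrences, hlen]) fun i _ _ => ?_
    simpa [occurrences] using hocc i
  · intro h
    have hlen : p.length = q.length := by simpa [occurrences] using congrArg List.length h
    refine ⟨hlen, fun i => ?_⟩
    rcases lt_or_ge i p.length with hi | hi
    · have hi' : i < q.length := hlen ▸ hi
      simpa [occurrences, hi, hi'] using congrArg (·[i]?) h
    · rw [occursAt_iff_of_length_le τ hi, occursAt_iff_of_length_le τ (hlen ▸ hi)]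

lemma numBallotClasses_eq_ncard_range (n : ℕ) :
    numBallotClasses τ n =
      (Set.range fun p : {p : List Bool // IsBallot p ∧ p.length = n} =>
        occurrences τ p.1).ncard := by
  have hker : ballotSetoid τ n = Setoid.ker fun p => occurrences τ p.1 :=
    Setoid.ext fun p q => pathEquiv_iff_occurrences_eq τ p.1 q.1
  rw [numBallotClasses, hker, ← Nat.card_coe_set_eq]
  exact Nat.card_congr (Setoid.quotientKerEquivRange _)

end Occurrences

def NoConsecutiveTrue (l : List Bool) : Prop :=
  l.IsChain fun a b => a = true → b = false

lemma setOf_noConsecutiveTrue_length_add_two (m : ℕ) :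
    {l | l.length = m + 2 ∧ NoConsecutiveTrue l} =
      List.cons false '' {l | l.length = m + 1 ∧ NoConsecutiveTrue l} ∪
        (fun l => true :: false :: l) '' {l | l.length = m ∧ NoConsecutiveTrue l} := by
  ext l
  rcases l with _ | ⟨_ | _, _ | ⟨_ | _, l⟩⟩ <;>
    simp [NoConsecutiveTrue, List.isChain_cons]

lemma ncard_noConsecutiveTrue : ∀ m : ℕ,
    {l : List Bool | l.length = m ∧ NoConsecutiveTrue l}.ncard = Nat.fib (m + 2)
  | 0 => by
    rw [show {l : List Bool | l.length = 0 ∧ NoConsecutiveTrue l} = {[]} by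
      ext l; cases l <;> simp [NoConsecutiveTrue]]
    exact Set.ncard_singleton _
  | 1 => by
    rw [show {l : List Bool | l.length = 1 ∧ NoConsecutiveTrue l} = {[false], [true]} by
      ext l; rcases l with _ | ⟨_ | _, _ | _⟩ <;> simp [NoConsecutiveTrue]]
    exact Set.ncard_pair (by decide)
  | m + 2 => by
    have hfin (k : ℕ) : {l : List Bool | l.length = k ∧ NoConsecutiveTrue l}.Finite :=
      (List.finite_length_eq Bool k).subset fun _ h => h.1
    rw [setOf_noConsecutiveTrue_length_add_two,
      Set.ncard_union_eq ?_ ((hfin _).image _) ((hfin _).image _),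
      Set.ncard_image_of_injective _ List.cons_injective,
      Set.ncard_image_of_injective _ fun _ _ h => by simpa using h,
      ncard_noConsecutiveTrue (m + 1), ncard_noConsecutiveTrue m, Nat.fib_add_two (n := m + 2),
      add_comm]
    exact Set.disjoint_left.mpr (by rintro _ ⟨_, -, rfl⟩ ⟨_, -, h⟩; cases h)

lemma count_false_le_count_true_of_isChain : ∀ {p : List Bool},
    p.IsChain (fun a b => a = true ∨ b = true) → p.head? ≠ some false →
      p.count false ≤ p.count true
  | [], _, _ => by simp
  | [true], _, _ => by simp
  | true :: q@(true :: _), h, _ => by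
    have := count_false_le_count_true_of_isChain h.tail (by simp)
    simp at this ⊢
    omega
  | true :: false :: q, h, _ => by
    have hq : q.head? ≠ some false := by
      rcases q with _ | ⟨_ | _, _⟩ <;> simp_all [List.isChain_cons_cons]
    have := count_false_le_count_true_of_isChain (p := q) h.tail.tail hq
    simp
    omega
  | false :: _, _, h => absurd rfl h

lemma isBallot_of_isChain {p : List Bool} (hchain : p.IsChain (fun a b => a = true ∨ b = true))
    (hhead : p.head? ≠ some false) : IsBallot p := fun k =>
  count_false_le_count_true_of_isChain (hchain.take k) <| by
    rw [List.head?_take]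
    split <;> simp [hhead]

lemma noConsecutiveTrue_occurrences_udu (p : List Bool) :
    NoConsecutiveTrue (occurrences [true, false, true] p) := by
  induction p with
  | nil => exact List.IsChain.nil
  | cons a p ih =>
    rw [occurrences_cons]
    refine List.isChain_cons.mpr ⟨?_, ih⟩
    rcases p with _ | ⟨b, p⟩
    · simp
    · cases b <;> simp [OccursAt]

lemma occurrences_udu_eq_take_append {p : List Bool} {m : ℕ} (hp : p.length = m + 2) :
    occurrences [true, false, true] p =
      (occurrences [true, false, true] p).take m ++ [false, false] := by
  obtain ⟨a, b, hab⟩ := List.length_eq_two.mp (by simp [hp] : (p.drop m).length = 2)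
  conv_lhs => rw [← List.take_append_drop m (occurrences _ p), ← occurrences_drop, hab]
  cases a <;> cases b <;> rfl

def valleyPath (l : List Bool) : List Bool := true :: (l.map not ++ [true])

lemma occurrences_udu_valleyPath : ∀ {l : List Bool}, NoConsecutiveTrue l →
    occurrences [true, false, true] (valleyPath l) = l ++ [false, false]
  | [], _ => rfl
  | [true], _ => rfl
  | false :: l, h => by
    have := occurrences_udu_valleyPath (l := l) h.tail
    simp_all [valleyPath, OccursAt]
  | true :: false :: l, h => by
    have := occurrences_udu_valleyPath (l := l) h.tail.tail
    simp_all [valleyPath, OccursAt]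
  | true :: true :: _, h => absurd (List.isChain_cons_cons.mp h).1 (by simp)

lemma isBallot_valleyPath {l : List Bool} (hl : NoConsecutiveTrue l) : IsBallot (valleyPath l) := by
  refine isBallot_of_isChain ?_ (by simp [valleyPath])
  have : (l.map not).IsChain (fun a b => a = true ∨ b = true) := by
    simpa [List.isChain_map, NoConsecutiveTrue, imp_iff_not_or] using hl
  simp [valleyPath, List.isChain_cons, List.isChain_append, this]

lemma range_occurrences_udu (m : ℕ) :
    (Set.range fun p : {p : List Bool // IsBallot p ∧ p.length = m + 2} =>
        occurrences [true, false, true] p.1) =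
      (· ++ [false, false]) '' {l | l.length = m ∧ NoConsecutiveTrue l} := by
  ext o
  constructor
  · rintro ⟨⟨p, -, hp⟩, rfl⟩
    refine ⟨_, ⟨?_, (noConsecutiveTrue_occurrences_udu p).take m⟩,
      (occurrences_udu_eq_take_append hp).symm⟩
    simp [occurrences, hp]
  · rintro ⟨l, ⟨hlen, hl⟩, rfl⟩
    exact ⟨⟨valleyPath l, isBallot_valleyPath hl, by simp [valleyPath, hlen]⟩,
      occurrences_udu_valleyPath hl⟩

lemma IsBallot.eq_of_length_eq_one {p : List Bool} (hp : IsBallot p) (hlen : p.length = 1) :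
    p = [true] := by
  obtain ⟨a, rfl⟩ := List.length_eq_one_iff.mp hlen
  cases a
  · simpa using hp 1
  · rfl

lemma numBallotClasses_one (τ : List Bool) : numBallotClasses τ 1 = 1 := by
  rw [numBallotClasses_eq_ncard_range, Set.ncard_eq_one]
  refine ⟨occurrences τ [true], Set.eq_singleton_iff_unique_mem.mpr ⟨?_, ?_⟩⟩
  · exact ⟨⟨[true], fun k => by cases k <;> simp, rfl⟩, rfl⟩
  · rintro _ ⟨⟨p, hp, hlen⟩, rfl⟩
    exact congrArg _ (hp.eq_of_length_eq_one hlen)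

/-- the number of UDU-equivalence classes of ballot paths of length
`n ≥ 1` is the `n`-th Fibonacci number. -/
theorem udu_classes_ballot (n : ℕ) (hn : 1 ≤ n) :
    numBallotClasses [true, false, true] n = Nat.fib n := by
  obtain _ | _ | m := n
  · omega
  · exact numBallotClasses_one _
  · rw [numBallotClasses_eq_ncard_range, range_occurrences_udu,
      Set.ncard_image_of_injective _ (List.append_left_injective _), ncard_noConsecutiveTrue]
end

section
/- Let p be a Dyck path and let p′ be a ballot path that is UUU-equivalent to p and satisfies all of the following: p′ does not begin with UUDD, p′ contains no occurrence of the factor DUDD and no occurrence of the factor DUUD, p′ contains no occurrence of DUD at height greater than 1, and p′ either ends with UUU, or ends with D, or p′ is the empty path, or p′ = U. Then p′ is a Dyck path. -/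
/-! Compare the heights of `p'` and `p` step by step. While `p'` is weakly below `p`, it can
only overtake `p` by an up-step at a position where `p` steps down. That position is not inside
a UUU of `p`, hence not inside a UUU of `p'`, and the excluded patterns then force `p'` to step
down right away from height at most `2`. Since `p` stays nonnegative and the two heights have
the same parity, this down-step puts `p'` weakly below `p` again. So `p'` ends at height at
most `0`, and being a ballot path it ends at `0`. -/

theorem occursAt_nil (l : List Bool) (i : ℕ) : OccursAt [] l i := by
  simp [OccursAt]

theorem occursAt_cons_iff {a : Bool} {τ l : List Bool} {i : ℕ} :
    OccursAt (a :: τ) l i ↔ l[i]? = some a ∧ OccursAt τ l (i + 1) := by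
  unfold OccursAt
  rcases Nat.lt_or_ge i l.length with hi | hi
  · rw [List.drop_eq_getElem_cons hi, List.getElem?_eq_getElem hi]
    simp only [List.length_cons, List.take_succ_cons, List.cons.injEq, Option.some.injEq]
  · simp [List.drop_eq_nil_of_le hi, List.getElem?_eq_none hi]

theorem OccursAt.isInfix {τ l : List Bool} {i : ℕ} (h : OccursAt τ l i) : τ <:+: l :=
  h ▸ (List.take_prefix _ _).isInfix.trans (List.drop_suffix _ _).isInfix

theorem occursAt_of_isSuffix {τ l : List Bool} (h : τ <:+ l) :
    OccursAt τ l (l.length - τ.length) := by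
  obtain ⟨t, rfl⟩ := h
  simp [OccursAt]

@[simp] theorem pathHeight_zero (l : List Bool) : pathHeight l 0 = 0 := by
  simp [pathHeight]

theorem pathHeight_succ {l : List Bool} {j : ℕ} {b : Bool} (h : l[j]? = some b) :
    pathHeight l (j + 1) = pathHeight l j + if b then 1 else -1 := by
  unfold pathHeight
  rw [List.take_add_one, h]
  cases b <;> simp [List.count_append] <;> omega

theorem pathHeight_length (l : List Bool) :
    pathHeight l l.length = l.count true - l.count false := by
  simp [pathHeight]

theorem even_pathHeight_sub {p q : List Bool} (h : p.length = q.length) (j : ℕ) :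
    Even (pathHeight q j - pathHeight p j) := by
  have hp := List.count_true_add_count_false (p.take j)
  have hq := List.count_true_add_count_false (q.take j)
  have hlen : (p.take j).length = (q.take j).length := by simp [h]
  exact ⟨(q.take j).count true - (p.take j).count true, by unfold pathHeight; omega⟩

theorem IsBallot.pathHeight_nonneg {l : List Bool} (h : IsBallot l) (j : ℕ) :
    0 ≤ pathHeight l j := by
  have := h j
  unfold pathHeight
  omega

theorem IsBallot.getElem?_zero_ne_false {l : List Bool} (h : IsBallot l) :
    l[0]? ≠ some false := fun h0 => by
  have := pathHeight_succ h0
  have := h.pathHeight_nonneg 1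
  simp_all

def CoveredBy (τ l : List Bool) (j : ℕ) : Prop :=
  ∃ i, i ≤ j ∧ j < i + τ.length ∧ OccursAt τ l i

theorem PathEquiv.coveredBy_iff {τ p q : List Bool} (h : PathEquiv τ p q) (j : ℕ) :
    CoveredBy τ p j ↔ CoveredBy τ q j := by
  simp only [CoveredBy, h.2]

theorem not_coveredBy_uuu_of_getElem?_eq_false {l : List Bool} {j : ℕ} (h : l[j]? = some false) :
    ¬ CoveredBy [true, true, true] l j := by
  rintro ⟨i, hij, hji, hocc⟩
  obtain ⟨d, rfl⟩ := Nat.exists_eq_add_of_le hij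
  simp only [occursAt_cons_iff, occursAt_nil, and_true, Nat.add_assoc] at hocc
  replace hji : d < 3 := by simp at hji; omega
  interval_cases d <;> simp_all

theorem exists_occursAt_uuu_of_last_up {l : List Bool} {k : ℕ}
    (hend : [true, true, true] <:+ l ∨ [false] <:+ l ∨ l = [] ∨ l = [true])
    (hk : l[k]? = some true) (hlast : l[k + 1]? = none) (hk0 : k ≠ 0) :
    ∃ i, i + 2 = k ∧ OccursAt [true, true, true] l i := by
  have hlen : l.length = k + 1 := by
    have := (List.getElem?_eq_some_iff.mp hk).1
    have := List.getElem?_eq_none_iff.mp hlast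
    omega
  rcases hend with h | h | rfl | rfl
  · have := h.length_le
    exact ⟨_, by simp at this ⊢; omega, occursAt_of_isSuffix h⟩
  · have := occursAt_of_isSuffix h
    simp only [occursAt_cons_iff, hlen, List.length_singleton, Nat.add_sub_cancel, hk] at this
    simp at this
  · simp at hlen
  · simp at hlen; omega

theorem peak_le_two_of_not_coveredBy_uuu {l : List Bool} {j : ℕ}
    (hDUUD : ¬ [false, true, true, false] <:+: l)
    (hDUD : ∀ i : ℕ, OccursAt [false, true, false] l i →
      ∃ k : ℕ, i ≤ k ∧ k ≤ i + 3 ∧ pathHeight l k ≤ 1)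
    (hend : [true, true, true] <:+ l ∨ [false] <:+ l ∨ l = [] ∨ l = [true])
    (hj : l[j]? = some true) (hj0 : j ≠ 0) (hnc : ¬ CoveredBy [true, true, true] l j) :
    l[j + 1]? = some false ∧ pathHeight l (j + 1) ≤ 2 := by
  obtain ⟨m, rfl⟩ : ∃ m, j = m + 1 := ⟨j - 1, by omega⟩
  have covered (i : ℕ) (hi : i ≤ m + 1) (hi' : m + 1 ≤ i + 2) (h0 : l[i]? = some true)
      (h1 : l[i + 1]? = some true) (h2 : l[i + 2]? = some true) : False :=
    hnc ⟨i, hi, by simp; omega, by simp [occursAt_cons_iff, occursAt_nil, Nat.add_assoc, *]⟩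
  have no_duud (i : ℕ) (h0 : l[i]? = some false) (h1 : l[i + 1]? = some true)
      (h2 : l[i + 2]? = some true) (h3 : l[i + 3]? = some false) : False :=
    hDUUD (OccursAt.isInfix (i := i) (by simp [occursAt_cons_iff, occursAt_nil, Nat.add_assoc, *]))
  have last_up (k : ℕ) (hk : l[k]? = some true) (hlast : l[k + 1]? = none)
      (hk' : m + 1 ≤ k) (hk'' : k ≤ m + 2) : False := by
    obtain ⟨i, rfl, hi⟩ := exists_occursAt_uuu_of_last_up hend hk hlast (by omega)
    exact hnc ⟨i, by omega, by simp; omega, hi⟩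
  -- Every configuration of the letters at `m`, `m + 2`, `m + 3` other than DUD and a path
  -- starting UUD puts `j` inside a UUU, creates a DUUD, or ends the path in DU, DUU or UU.
  obtain ⟨a, ha⟩ : ∃ a, l[m]? = some a :=
    ⟨_, List.getElem?_eq_getElem (Nat.lt_of_succ_lt (List.getElem?_eq_some_iff.mp hj).1)⟩
  rcases hc : l[m + 2]? with _ | _ | _
  · exact (last_up (m + 1) hj hc le_rfl (by omega)).elim
  · cases a
    · obtain ⟨k, hk, hk', hlow⟩ := hDUD m (by simp [occursAt_cons_iff, occursAt_nil, Nat.add_assoc, *])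
      have e1 : pathHeight l (m + 1) = pathHeight l m - 1 := pathHeight_succ ha
      have e2 : pathHeight l (m + 2) = pathHeight l (m + 1) + 1 := pathHeight_succ hj
      have e3 : pathHeight l (m + 3) = pathHeight l (m + 2) - 1 := pathHeight_succ hc
      refine ⟨rfl, show pathHeight l (m + 2) ≤ 2 from ?_⟩
      obtain rfl | rfl | rfl | rfl : k = m ∨ k = m + 1 ∨ k = m + 2 ∨ k = m + 3 := by omega
      all_goals omega
    · refine ⟨rfl, show pathHeight l (m + 2) ≤ 2 from ?_⟩
      rcases m with _ | m
      · have e1 : pathHeight l 1 = pathHeight l 0 + 1 := pathHeight_succ ha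
        have e2 : pathHeight l 2 = pathHeight l 1 + 1 := pathHeight_succ hj
        simp only [pathHeight_zero] at e1
        show pathHeight l 2 ≤ 2
        omega
      obtain ⟨b, hb⟩ : ∃ b, l[m]? = some b :=
        ⟨_, List.getElem?_eq_getElem (by have := (List.getElem?_eq_some_iff.mp hj).1; omega)⟩
      cases b
      · exact (no_duud m hb ha hj hc).elim
      · exact (covered m (by omega) (by omega) hb ha hj).elim
  · exfalso
    cases a
    · rcases hd : l[m + 3]? with _ | _ | _
      · exact last_up (m + 2) hc hd (by omega) le_rfl
      · exact no_duud m ha hj hc hd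
      · exact covered (m + 1) (by omega) (by omega) hj hc hd
    · exact covered m (by omega) (by omega) ha hj hc

section Domination

variable {p q : List Bool}

theorem pathHeight_le_or_low_down (hp : IsBallot p) (hlen : p.length = q.length)
    (hpeak : ∀ j, q[j]? = some true → p[j]? = some false →
      q[j + 1]? = some false ∧ pathHeight q (j + 1) ≤ 2) :
    ∀ j ≤ q.length, pathHeight q j ≤ pathHeight p j ∨
      (q[j]? = some false ∧ pathHeight q j ≤ 2) := by
  intro j
  induction j with
  | zero => simp
  | succ j ih =>
    intro hj
    obtain ⟨b, hb⟩ : ∃ b, q[j]? = some b := ⟨_, List.getElem?_eq_getElem (by omega)⟩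
    obtain ⟨c, hc⟩ : ∃ c, p[j]? = some c := ⟨_, List.getElem?_eq_getElem (by omega)⟩
    have hq_step := pathHeight_succ hb
    have hp_step := pathHeight_succ hc
    rcases ih (by omega) with hle | ⟨hdown, hlow⟩
    · cases b <;> cases c <;> simp only [Bool.false_eq_true, if_true, if_false] at hq_step hp_step
      · exact .inl (by omega)
      · exact .inl (by omega)
      · exact .inr (hpeak j hb hc)
      · exact .inl (by omega)
    · obtain rfl : b = false := by simpa [hdown] using hb.symm
      have hpos := hp.pathHeight_nonneg (j + 1)
      obtain ⟨r, hr⟩ := even_pathHeight_sub hlen (j + 1)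
      simp only [Bool.false_eq_true, if_false] at hq_step
      exact .inl (by omega)

theorem pathHeight_length_le (hp : IsBallot p) (hlen : p.length = q.length)
    (hpeak : ∀ j, q[j]? = some true → p[j]? = some false →
      q[j + 1]? = some false ∧ pathHeight q (j + 1) ≤ 2) :
    pathHeight q q.length ≤ pathHeight p p.length := by
  rcases pathHeight_le_or_low_down hp hlen hpeak q.length le_rfl with h | ⟨h, -⟩
  · rwa [hlen]
  · simp at h

end Domination

theorem uuu_representative_of_dyck_is_dyck_general (p p' : List Bool)
    (hp : IsDyck p) (hp' : IsBallot p')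
    (hequiv : PathEquiv [true, true, true] p p')
    (h3 : ¬ [false, true, true, false] <:+: p')
    (h4 : ∀ i : ℕ, OccursAt [false, true, false] p' i →
      ∃ j : ℕ, i ≤ j ∧ j ≤ i + 3 ∧ pathHeight p' j ≤ 1)
    (h5 : [true, true, true] <:+ p' ∨ [false] <:+ p' ∨ p' = [] ∨ p' = [true]) :
    IsDyck p' := by
  have hle : pathHeight p' p'.length ≤ pathHeight p p.length :=
    pathHeight_length_le hp.1 hequiv.1 fun j hj' hj =>
      peak_le_two_of_not_coveredBy_uuu h3 h4 h5 hj'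
        (by rintro rfl; exact hp.1.getElem?_zero_ne_false hj)
        ((hequiv.coveredBy_iff j).not.mp (not_coveredBy_uuu_of_getElem?_eq_false hj))
  have hnonneg := hp'.pathHeight_nonneg p'.length
  have hbalanced := hp.2
  rw [pathHeight_length, pathHeight_length] at *
  exact ⟨hp', by omega⟩

/-- a ballot path which is UUU-equivalent to a Dyck path and satisfies
all the representative conditions for the string UUU is itself a Dyck path. -/
theorem uuu_representative_of_dyck_is_dyck (p p' : List Bool)
    (hp : IsDyck p) (hp' : IsBallot p')
    (hequiv : PathEquiv [true, true, true] p p')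
    (h1 : ¬ [true, true, false, false] <+: p')
    (h2 : ¬ [false, true, false, false] <:+: p')
    (h3 : ¬ [false, true, true, false] <:+: p')
    (h4 : ∀ i : ℕ, OccursAt [false, true, false] p' i →
      ∃ j : ℕ, i ≤ j ∧ j ≤ i + 3 ∧ pathHeight p' j ≤ 1)
    (h5 : [true, true, true] <:+ p' ∨ [false] <:+ p' ∨ p' = [] ∨ p' = [true]) :
    IsDyck p' :=
  uuu_representative_of_dyck_is_dyck_general p p' hp hp' hequiv h3 h4 h5
end
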